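/- Let n ≥ 4 be an integer, Λ ∈ ℝ, and let I ⊆ ℝ be a nonempty open interval with 0 ∉ I. A twice differentiable function f : I → ℝ satisfies the ordinary differential equation r · (d/dr)(r·f'(r) + (n−3)·f(r)) = −4Λr²/(n−2) for all r ∈ I if and only if there exist real constants α and M such that f(r) = α − 2M/r^{n−3} − 2Λr²/((n−1)(n−2)) for all r ∈ I. -/

import Mathlib

/-!
Write `E_k f (r) = r f'(r) + k f(r)` with `k = n - 3`. Since `(r^k f)' = r^(k-1) E_k f`, two
solutions of `E_k f = E_k g` on an interval avoiding `0` differ by a multiple of `r^(-k)`. The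
equation says `(E_k f)' = -4Λr/(n-2)`, so `E_k f = C - 2Λr²/(n-2)`, which is `E_k` of the profile
function with `α = C/k` and `M = 0`; the free multiple of `r^(-k)` is the mass term `-2M/r^k`.
-/

open Set Filter Topology

/-- The generalized Schwarzschild–Tangherlini profile function
`f_{α,M,Λ}(r) = α − 2M/r^{n−3} − 2Λr²/((n−1)(n−2))`. -/
noncomputable def gSTf (n : ℕ) (α M Λ r : ℝ) : ℝ :=
  α - 2 * M / r ^ (n - 3) - 2 * Λ * r ^ 2 / (((n : ℝ) - 1) * ((n : ℝ) - 2))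

noncomputable def eulerOp (k : ℝ) (f : ℝ → ℝ) (r : ℝ) : ℝ := r * deriv f r + k * f r

lemma natCast_mul_pow_pred_mul (k : ℕ) (r : ℝ) : (k : ℝ) * r ^ (k - 1) * r = k * r ^ k := by
  cases k <;> simp [pow_succ, mul_assoc]

lemma HasDerivAt.pow_mul {f : ℝ → ℝ} {f' r : ℝ} (hr : r ≠ 0) (hf : HasDerivAt f f' r) (k : ℕ) :
    HasDerivAt (fun x => x ^ k * f x) (r ^ k * (r * f' + k * f r) / r) r := by
  refine ((hasDerivAt_pow k r).mul hf).congr_deriv ?_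
  rw [eq_div_iff hr]
  linear_combination f r * natCast_mul_pow_pred_mul k r

lemma deriv_pow_mul {f : ℝ → ℝ} {r : ℝ} (hr : r ≠ 0) (hf : DifferentiableAt ℝ f r) (k : ℕ) :
    deriv (fun x => x ^ k * f x) r = r ^ k * eulerOp k f r / r :=
  (hf.hasDerivAt.pow_mul hr k).deriv

lemma Set.EqOn.eulerOp {s : Set ℝ} (hs : IsOpen s) {f g : ℝ → ℝ} (hfg : EqOn f g s) (k : ℝ) :
    EqOn (eulerOp k f) (eulerOp k g) s := fun r hr => by
  simp only [_root_.eulerOp, (hfg.eventuallyEq_of_mem (hs.mem_nhds hr)).deriv_eq, hfg hr]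

theorem IsOpen.exists_eqOn_add_div_pow_of_eqOn_eulerOp {s : Set ℝ} (hs : IsOpen s)
    (hs' : IsPreconnected s) (h0 : (0 : ℝ) ∉ s) {k : ℕ} {f g : ℝ → ℝ}
    (hf : DifferentiableOn ℝ f s) (hg : DifferentiableOn ℝ g s)
    (hfg : EqOn (eulerOp k f) (eulerOp k g) s) :
    ∃ D, EqOn f (fun r => g r + D / r ^ k) s := by
  have hr0 {r} (hr : r ∈ s) : r ≠ 0 := fun h => h0 (h ▸ hr)
  obtain ⟨D, hD⟩ := hs.exists_eq_add_of_deriv_eq (f := fun x => x ^ k * f x)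
    (g := fun x => x ^ k * g x) hs' ((differentiableOn_pow k).mul hf)
    ((differentiableOn_pow k).mul hg) fun r hr => by
      simp only [deriv_pow_mul (hr0 hr) (hf.differentiableAt (hs.mem_nhds hr)),
        deriv_pow_mul (hr0 hr) (hg.differentiableAt (hs.mem_nhds hr)), hfg hr]
  refine ⟨D, fun r hr => ?_⟩
  have hrk : r ^ k ≠ 0 := pow_ne_zero k (hr0 hr)
  have hDr : r ^ k * f r = r ^ k * g r + D := hD hr
  field_simp
  linear_combination hDr

lemma gSTf_eq_sub (n : ℕ) (α M Λ r : ℝ) :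
    gSTf n α M Λ r = gSTf n α 0 Λ r - 2 * M / r ^ (n - 3) := by
  simp only [gSTf]; ring

lemma differentiableAt_gSTf (n : ℕ) (α M Λ : ℝ) {r : ℝ} (hr : r ≠ 0) :
    DifferentiableAt ℝ (gSTf n α M Λ) r := by
  unfold gSTf
  fun_prop (disch := exact pow_ne_zero _ hr)

lemma eulerOp_gSTf {n : ℕ} (hn : 3 ≤ n) (α M Λ : ℝ) {r : ℝ} (hr : r ≠ 0) :
    eulerOp ((n : ℝ) - 3) (gSTf n α M Λ) r =
      ((n : ℝ) - 3) * α - 2 * Λ * r ^ 2 / ((n : ℝ) - 2) := by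
  obtain ⟨k, rfl⟩ : ∃ k, n = k + 3 := ⟨n - 3, by omega⟩
  have hgSTf : gSTf (k + 3) α M Λ =
      fun x => α - 2 * M / x ^ k - 2 * Λ * x ^ 2 / (((k : ℝ) + 2) * ((k : ℝ) + 1)) := by
    ext x; simp only [gSTf]; push_cast; ring_nf
  have hder : HasDerivAt (gSTf (k + 3) α M Λ) (2 * M * (k * r ^ (k - 1)) / (r ^ k) ^ 2
      - 2 * Λ * (2 * r) / (((k : ℝ) + 2) * ((k : ℝ) + 1))) r := by
    rw [hgSTf]
    refine (((hasDerivAt_const r α).sub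
      ((hasDerivAt_const r (2 * M)).div (hasDerivAt_pow k r) (pow_ne_zero k hr))).sub
      (((hasDerivAt_pow 2 r).const_mul (2 * Λ)).div_const _)).congr_deriv ?_
    simp only [zero_mul, zero_sub, Nat.cast_ofNat, Nat.add_one_sub_one, pow_one, sub_left_inj]
    ring
  rw [eulerOp, hder.deriv, hgSTf]
  have hk1 : (k : ℝ) + 1 ≠ 0 := by positivity
  have hk2 : (k : ℝ) + 2 ≠ 0 := by positivity
  have hrk : r ^ k ≠ 0 := pow_ne_zero k hr
  have e3 : ((k + 3 : ℕ) : ℝ) - 3 = k := by push_cast; ring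
  have e2 : ((k + 3 : ℕ) : ℝ) - 2 = k + 1 := by push_cast; ring
  rw [e3, e2]
  field_simp
  linear_combination (2 * M * (k + 1) * (k + 2)) * natCast_mul_pow_pred_mul k r

lemma hasDerivAt_eulerOp_gSTf {n : ℕ} (hn : 3 ≤ n) (α M Λ : ℝ) {r : ℝ} (hr : r ≠ 0) :
    HasDerivAt (eulerOp ((n : ℝ) - 3) (gSTf n α M Λ)) (-4 * Λ * r / ((n : ℝ) - 2)) r := by
  have hquad : HasDerivAt (fun x => ((n : ℝ) - 3) * α - 2 * Λ * x ^ 2 / ((n : ℝ) - 2))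
      (-4 * Λ * r / ((n : ℝ) - 2)) r :=
    ((hasDerivAt_const r _).sub (((hasDerivAt_pow 2 r).const_mul (2 * Λ)).div_const _)).congr_deriv
      (by ring)
  refine hquad.congr_of_eventuallyEq ?_
  filter_upwards [isOpen_ne.mem_nhds hr] with x hx using eulerOp_gSTf hn α M Λ hx

theorem IsOpen.exists_eqOn_gSTf_of_eulerOp_eq {n : ℕ} (hn : 4 ≤ n) {s : Set ℝ} (hs : IsOpen s)
    (hs' : IsPreconnected s) (h0 : (0 : ℝ) ∉ s) {f : ℝ → ℝ} (hf : DifferentiableOn ℝ f s)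
    {C Λ : ℝ} (hC : ∀ r ∈ s, eulerOp ((n : ℝ) - 3) f r = C - 2 * Λ * r ^ 2 / ((n : ℝ) - 2)) :
    ∃ α M, EqOn f (gSTf n α M Λ) s := by
  have hr0 {r} (hr : r ∈ s) : r ≠ 0 := fun h => h0 (h ▸ hr)
  have hk : (n : ℝ) - 3 = ((n - 3 : ℕ) : ℝ) := by rw [Nat.cast_sub (by omega)]; norm_num
  have hk0 : (n : ℝ) - 3 ≠ 0 := by rw [hk]; exact_mod_cast (by omega : n - 3 ≠ 0)
  set α := C / ((n : ℝ) - 3)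
  obtain ⟨D, hD⟩ := hs.exists_eqOn_add_div_pow_of_eqOn_eulerOp hs' h0 (k := n - 3)
    (g := gSTf n α 0 Λ) hf
    (fun r hr => (differentiableAt_gSTf n α 0 Λ (hr0 hr)).differentiableWithinAt) fun r hr => by
      rw [← hk, hC r hr, eulerOp_gSTf (by omega) _ _ _ (hr0 hr)]
      simp only [α]
      field_simp
  exact ⟨α, -D / 2, fun r hr => by rw [hD hr, gSTf_eq_sub n α (-D / 2)]; ring⟩

theorem gST_profile_ode_general (n : ℕ) (hn : 4 ≤ n) (Λ : ℝ) (a b : ℝ)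
    (h0 : (0 : ℝ) ∉ Set.Ioo a b) (f : ℝ → ℝ)
    (hf : ∀ r ∈ Set.Ioo a b, DifferentiableAt ℝ f r)
    (hf' : ∀ r ∈ Set.Ioo a b, DifferentiableAt ℝ (deriv f) r) :
    (∀ r ∈ Set.Ioo a b,
        r * deriv (fun s => s * deriv f s + ((n : ℝ) - 3) * f s) r =
          -4 * Λ * r ^ 2 / ((n : ℝ) - 2)) ↔
      ∃ α M : ℝ, ∀ r ∈ Set.Ioo a b, f r = gSTf n α M Λ r := by
  have hr0 {r} (hr : r ∈ Ioo a b) : r ≠ 0 := fun h => h0 (h ▸ hr)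
  change (∀ r ∈ Ioo a b, r * deriv (eulerOp ((n : ℝ) - 3) f) r = _) ↔ _
  constructor
  · intro hode
    have hEf : DifferentiableOn ℝ (eulerOp ((n : ℝ) - 3) f) (Ioo a b) := fun r hr =>
      ((differentiableAt_id.mul (hf' r hr)).add ((hf r hr).const_mul _)).differentiableWithinAt
    have hE₀ {r} (hr : r ∈ Ioo a b) := hasDerivAt_eulerOp_gSTf (n := n) (by omega) 0 0 Λ (hr0 hr)
    obtain ⟨C, hC⟩ := isOpen_Ioo.exists_eq_add_of_deriv_eq isPreconnected_Ioo hEf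
      (fun r hr => (hE₀ hr).differentiableAt.differentiableWithinAt) fun r hr => by
        rw [(hE₀ hr).deriv]
        apply mul_left_cancel₀ (hr0 hr)
        rw [hode r hr]; ring
    refine isOpen_Ioo.exists_eqOn_gSTf_of_eulerOp_eq hn isPreconnected_Ioo h0 (C := C)
      (fun r hr => (hf r hr).differentiableWithinAt) fun r hr => ?_
    rw [hC hr]
    dsimp only
    rw [eulerOp_gSTf (by omega) _ _ _ (hr0 hr)]
    ring
  · rintro ⟨α, M, hfM⟩ r hr
    have hE : eulerOp ((n : ℝ) - 3) f =ᶠ[𝓝 r] eulerOp ((n : ℝ) - 3) (gSTf n α M Λ) :=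
      (Set.EqOn.eulerOp isOpen_Ioo hfM _).eventuallyEq_of_mem (isOpen_Ioo.mem_nhds hr)
    rw [hE.deriv_eq, (hasDerivAt_eulerOp_gSTf (by omega) α M Λ (hr0 hr)).deriv]
    ring

/-- a twice differentiable `f` on a nonempty open interval
avoiding `0` satisfies `r·(d/dr)(r·f'(r) + (n−3)f(r)) = −4Λr²/(n−2)` iff it is
a gST profile function `f_{α,M,Λ}` for some constants `α, M`. -/
theorem gST_profile_ode (n : ℕ) (hn : 4 ≤ n) (Λ : ℝ) (a b : ℝ) (hab : a < b)
    (h0 : (0 : ℝ) ∉ Set.Ioo a b) (f : ℝ → ℝ)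
    (hf : ∀ r ∈ Set.Ioo a b, DifferentiableAt ℝ f r)
    (hf' : ∀ r ∈ Set.Ioo a b, DifferentiableAt ℝ (deriv f) r) :
    (∀ r ∈ Set.Ioo a b,
        r * deriv (fun s => s * deriv f s + ((n : ℝ) - 3) * f s) r =
          -4 * Λ * r ^ 2 / ((n : ℝ) - 2)) ↔
      ∃ α M : ℝ, ∀ r ∈ Set.Ioo a b, f r = gSTf n α M Λ r :=
  gST_profile_ode_general n hn Λ a b h0 f hf hf'
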